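/- arXiv:2209.00697 — 2 statements merged into one kernel-verified Lean document; each statement's English description precedes it below -/
import Mathlib

section
/- With Q, Q' as in the construction (Q the dual quiver of a φ-preserved brane tiling with all vertex orbits of size n, and ℂQ' the localisation of ℂQ^# at the isomorphism arrows), the map ξ : ℂQ → ℂQ' sending each constant path e_i to e_i and each arrow a ∈ Q₁ to p_a a_j q_a — where a lies in the φ-orbit of the chosen generating arrow a_j and p_a : t(a_j) → t(a), q_a : s(a) → s(a_j) are the unique paths composed solely of isomorphism arrows or their inverses — is a well-defined injective algebra homomorphism. -/
noncomputable section
open scoped Classical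

structure Quiv : Type 1 where
  V : Type
  A : Type
  [finV : Fintype V]
  [finA : Fintype A]
  s : A → V
  t : A → V

attribute [instance] Quiv.finV Quiv.finA

namespace Quiv

variable (k : Type) [CommRing k] (Q : Quiv)

inductive PathRel : FreeAlgebra k (Q.V ⊕ Q.A) → FreeAlgebra k (Q.V ⊕ Q.A) → Prop
  | vertex_mul (i j : Q.V) : PathRel
      (FreeAlgebra.ι k (Sum.inl i) * FreeAlgebra.ι k (Sum.inl j))
      (if i = j then FreeAlgebra.ι k (Sum.inl i) else 0)
  | vertex_sum : PathRel (∑ i : Q.V, FreeAlgebra.ι k (Sum.inl i)) 1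
  | target_mul (a : Q.A) : PathRel
      (FreeAlgebra.ι k (Sum.inl (Q.t a)) * FreeAlgebra.ι k (Sum.inr a))
      (FreeAlgebra.ι k (Sum.inr a))
  | source_mul (a : Q.A) : PathRel
      (FreeAlgebra.ι k (Sum.inr a) * FreeAlgebra.ι k (Sum.inl (Q.s a)))
      (FreeAlgebra.ι k (Sum.inr a))

def PathAlg : Type := RingQuot (PathRel k Q)

instance : Ring (PathAlg k Q) := inferInstanceAs (Ring (RingQuot _))
instance : Algebra k (PathAlg k Q) := inferInstanceAs (Algebra k (RingQuot _))

def vtx (i : Q.V) : PathAlg k Q :=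
  RingQuot.mkAlgHom k (PathRel k Q) (FreeAlgebra.ι k (Sum.inl i))

def arr (a : Q.A) : PathAlg k Q :=
  RingQuot.mkAlgHom k (PathRel k Q) (FreeAlgebra.ι k (Sum.inr a))

def pathOf (l : List Q.A) : PathAlg k Q := (l.map (arr k Q)).prod

def Composable (l : List Q.A) : Prop := List.Chain' (fun a b => Q.s a = Q.t b) l

def IsCycle (l : List Q.A) : Prop :=
  l ≠ [] ∧ List.Chain' (fun a b => Q.s a = Q.t b) (l ++ l.take 1)

def IsPathFrom (l : List Q.A) (i j : Q.V) : Prop :=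
  Composable Q l ∧ (l = [] → i = j) ∧
    (∀ h : l ≠ [], Q.t (l.head h) = j) ∧ (∀ h : l ≠ [], Q.s (l.getLast h) = i)

def cycDeriv (l : List Q.A) (a : Q.A) : PathAlg k Q :=
  ∑ i ∈ Finset.range l.length,
    if (l.rotate i).head? = some a then pathOf k Q (l.rotate i).tail else 0

abbrev Potential := List (k × List Q.A)

def Potential.deriv (W : Potential k Q) (a : Q.A) : PathAlg k Q :=
  (W.map fun p => p.1 • cycDeriv k Q p.2 a).sum

def Potential.elem (W : Potential k Q) : PathAlg k Q :=
  (W.map fun p => p.1 • pathOf k Q p.2).sum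

inductive JacRel (W : Potential k Q) : PathAlg k Q → PathAlg k Q → Prop
  | deriv (a : Q.A) : JacRel W (Potential.deriv k Q W a) 0

def Jac (W : Potential k Q) : Type := RingQuot (JacRel k Q W)

instance (W : Potential k Q) : Ring (Jac k Q W) := inferInstanceAs (Ring (RingQuot _))
instance (W : Potential k Q) : Algebra k (Jac k Q W) := inferInstanceAs (Algebra k (RingQuot _))

def jacMk (W : Potential k Q) : PathAlg k Q →ₐ[k] Jac k Q W :=
  RingQuot.mkAlgHom k (JacRel k Q W)

def Potential.memIdeal (W : Potential k Q) (x : PathAlg k Q) : Prop :=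
  jacMk k Q W x = 0

def loc (S : Set Q.A) : Quiv where
  V := Q.V
  A := Q.A ⊕ ↥S
  s := Sum.elim Q.s fun a => Q.t a.1
  t := Sum.elim Q.t fun a => Q.s a.1

inductive LocRel (S : Set Q.A) : PathAlg k (Q.loc S) → PathAlg k (Q.loc S) → Prop
  | inv_mul (a : ↥S) : LocRel S
      (arr k (Q.loc S) (Sum.inr a) * arr k (Q.loc S) (Sum.inl a.1))
      (vtx k (Q.loc S) (Q.s a.1))
  | mul_inv (a : ↥S) : LocRel S
      (arr k (Q.loc S) (Sum.inl a.1) * arr k (Q.loc S) (Sum.inr a))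
      (vtx k (Q.loc S) (Q.t a.1))

def LocAlg (S : Set Q.A) : Type := RingQuot (LocRel k Q S)

instance (S : Set Q.A) : Ring (LocAlg k Q S) := inferInstanceAs (Ring (RingQuot _))
instance (S : Set Q.A) : Algebra k (LocAlg k Q S) := inferInstanceAs (Algebra k (RingQuot _))

def locMk (S : Set Q.A) : PathAlg k (Q.loc S) →ₐ[k] LocAlg k Q S :=
  RingQuot.mkAlgHom k (LocRel k Q S)

def locVtx (S : Set Q.A) (i : Q.V) : LocAlg k Q S := locMk k Q S (vtx k (Q.loc S) i)

def locArr (S : Set Q.A) (x : (Q.loc S).A) : LocAlg k Q S := locMk k Q S (arr k (Q.loc S) x)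

def locProd (S : Set Q.A) (l : List (Q.loc S).A) : LocAlg k Q S :=
  locMk k Q S (pathOf k (Q.loc S) l)

inductive JacLRel (S : Set Q.A) (W : Potential k (Q.loc S)) :
    LocAlg k Q S → LocAlg k Q S → Prop
  | deriv (x : (Q.loc S).A) : JacLRel S W (locMk k Q S (Potential.deriv k (Q.loc S) W x)) 0

def JacL (S : Set Q.A) (W : Potential k (Q.loc S)) : Type := RingQuot (JacLRel k Q S W)

instance (S : Set Q.A) (W : Potential k (Q.loc S)) : Ring (JacL k Q S W) :=
  inferInstanceAs (Ring (RingQuot _))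
instance (S : Set Q.A) (W : Potential k (Q.loc S)) : Algebra k (JacL k Q S W) :=
  inferInstanceAs (Algebra k (RingQuot _))

def jacLMk (S : Set Q.A) (W : Potential k (Q.loc S)) : LocAlg k Q S →ₐ[k] JacL k Q S W :=
  RingQuot.mkAlgHom k (JacLRel k Q S W)

def memIdealL (S : Set Q.A) (W : Potential k (Q.loc S)) (x : LocAlg k Q S) : Prop :=
  jacLMk k Q S W x = 0

def locWeight (S : Set Q.A) (w : Q.A → ℤ) : (Q.loc S).A → ℤ :=
  Sum.elim w fun a => - w a.1

def degPart (S : Set Q.A) (w : Q.A → ℤ) (d : ℤ) : Submodule k (LocAlg k Q S) :=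
  Submodule.span k {x | (d = 0 ∧ ∃ i : Q.V, x = locVtx k Q S i) ∨
    ∃ l : List (Q.loc S).A, (l.map (locWeight Q S w)).sum = d ∧ x = locProd k Q S l}

structure Tiling where
  TV : Type
  [finTV : Fintype TV]
  isWhite : TV → Bool
  whiteOf : Q.A → TV
  blackOf : Q.A → TV
  whiteOf_white : ∀ a, isWhite (whiteOf a) = true
  blackOf_black : ∀ a, isWhite (blackOf a) = false
  cyc : TV → List Q.A
  cyc_isCycle : ∀ v, IsCycle Q (cyc v)
  cyc_nodup : ∀ v, (cyc v).Nodup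
  mem_cyc : ∀ v a, a ∈ cyc v ↔ whiteOf a = v ∨ blackOf a = v

attribute [instance] Tiling.finTV

def Tiling.potential (T : Tiling Q) : Potential k Q :=
  (Finset.univ (α := T.TV)).toList.map fun v =>
    ((if T.isWhite v then (1 : k) else -1), T.cyc v)

structure Aut where
  onV : Q.V ≃ Q.V
  onA : Q.A ≃ Q.A
  s_comm : ∀ a, Q.s (onA a) = onV (Q.s a)
  t_comm : ∀ a, Q.t (onA a) = onV (Q.t a)

structure TAut (T : Tiling Q) extends Aut Q where
  onTV : T.TV ≃ T.TV
  white_comm : ∀ v, T.isWhite (onTV v) = T.isWhite v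
  whiteOf_comm : ∀ a, T.whiteOf (onA a) = onTV (T.whiteOf a)
  blackOf_comm : ∀ a, T.blackOf (onA a) = onTV (T.blackOf a)
  cyc_comm : ∀ v, ∃ m, T.cyc (onTV v) = ((T.cyc v).map onA).rotate m

def Aut.OrderDvd (g : Aut Q) (n : ℕ) : Prop :=
  (∀ i, (⇑g.onV)^[n] i = i) ∧ (∀ a, (⇑g.onA)^[n] a = a)

def Aut.FreeVertexOrbits (g : Aut Q) (n : ℕ) : Prop :=
  ∀ i : Q.V, ∀ m, 0 < m → m < n → (⇑g.onV)^[m] i ≠ i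

structure OrbitChoice (g : Aut Q) where
  genArrow : Q.A → Q.A
  genArrow_orbit : ∀ a, ∃ m, (⇑g.onA)^[m] (genArrow a) = a
  genArrow_comm : ∀ a, genArrow (g.onA a) = genArrow a
  genArrow_idem : ∀ a, genArrow (genArrow a) = genArrow a
  repV : Q.V → Q.V
  repV_orbit : ∀ i, ∃ m, (⇑g.onV)^[m] (repV i) = i
  repV_comm : ∀ i, repV (g.onV i) = repV i
  repV_idem : ∀ i, repV (repV i) = repV i

def sharp (g : Aut Q) (n : ℕ) (C : OrbitChoice Q g) : Quiv where
  V := Q.V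
  A := {a : Q.A // C.genArrow a = a} ⊕ ({i : Q.V // C.repV i = i} × Fin (n - 1))
  s := Sum.elim (fun a => Q.s a.1) fun p => (⇑g.onV)^[p.2.1] p.1.1
  t := Sum.elim (fun a => Q.t a.1) fun p => (⇑g.onV)^[p.2.1 + 1] p.1.1

def isoSet (g : Aut Q) (n : ℕ) (C : OrbitChoice Q g) : Set (sharp Q g n C).A :=
  Set.range Sum.inr

variable (g : Aut Q) (n : ℕ) (C : OrbitChoice Q g)

/-- An isomorphism arrow, viewed as an arrow of the localised quiver. -/
def isoArrLoc (y : {i : Q.V // C.repV i = i} × Fin (n - 1)) :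
    ((sharp Q g n C).loc (isoSet Q g n C)).A :=
  Sum.inl (Sum.inr y)

/-- The inverse of an isomorphism arrow, viewed as an arrow of the localised
quiver. -/
def isoInvLoc (y : {i : Q.V // C.repV i = i} × Fin (n - 1)) :
    ((sharp Q g n C).loc (isoSet Q g n C)).A :=
  Sum.inr ⟨Sum.inr y, ⟨y, rfl⟩⟩

/-- The chosen generating arrow of the orbit of `a`, viewed as an arrow of the
localised quiver. -/
def genLoc (a : Q.A) : ((sharp Q g n C).loc (isoSet Q g n C)).A :=
  Sum.inl (Sum.inl ⟨C.genArrow a, C.genArrow_idem a⟩)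

/-- `l` consists solely of isomorphism arrows and their inverses. -/
def IsIsoList (l : List ((sharp Q g n C).loc (isoSet Q g n C)).A) : Prop :=
  ∀ x ∈ l, (∃ y, x = isoArrLoc Q g n C y) ∨ (∃ y, x = isoInvLoc Q g n C y)

/-- A choice, for every arrow `a` of `Q`, of the connecting paths `p_a` (from
`t(a_j)` to `t(a)`) and `q_a` (from `s(a)` to `s(a_j)`) composed solely of
isomorphism arrows and their inverses, where `a_j` is the chosen generating
arrow of the orbit of `a`. -/
structure ConnData where
  P : Q.A → List ((sharp Q g n C).loc (isoSet Q g n C)).A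
  Qc : Q.A → List ((sharp Q g n C).loc (isoSet Q g n C)).A
  isoP : ∀ a, IsIsoList Q g n C (P a)
  isoQc : ∀ a, IsIsoList Q g n C (Qc a)
  endP : ∀ a, IsPathFrom ((sharp Q g n C).loc (isoSet Q g n C)) (P a)
      (Q.t (C.genArrow a)) (Q.t a)
  endQc : ∀ a, IsPathFrom ((sharp Q g n C).loc (isoSet Q g n C)) (Qc a)
      (Q.s a) (Q.s (C.genArrow a))

/-- The image of an arrow `a` of `Q` under `ξ`, as a list of arrows of the
localised quiver: `p_a ⧺ [a_j] ⧺ q_a`. -/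
def xiArrList (cd : ConnData Q g n C) (a : Q.A) :
    List ((sharp Q g n C).loc (isoSet Q g n C)).A :=
  cd.P a ++ [genLoc Q g n C a] ++ cd.Qc a

/-- The image of a path of `Q` under `ξ`, as a list of arrows of the localised
quiver. -/
def xiList (cd : ConnData Q g n C) (l : List Q.A) :
    List ((sharp Q g n C).loc (isoSet Q g n C)).A :=
  l.flatMap (xiArrList Q g n C cd)

/-- The specification of the algebra homomorphism
`ξ : kQ → kQ'`: it sends constant paths to constant paths, and the arrow `a`
to `p_a a_j q_a`. -/
def XiSpec (cd : ConnData Q g n C)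
    (ξ : PathAlg k Q →ₐ[k] LocAlg k (sharp Q g n C) (isoSet Q g n C)) : Prop :=
  (∀ i : Q.V, ξ (vtx k Q i) = locVtx k (sharp Q g n C) (isoSet Q g n C) i) ∧
  ∀ a : Q.A, ξ (arr k Q a) =
    locProd k (sharp Q g n C) (isoSet Q g n C) (xiArrList Q g n C cd a)

/-- The potential `W' = ξ(W)` on the localised quiver induced by the potential
of a brane tiling. -/
def inducedPotential (T : Tiling Q) (cd : ConnData Q g n C) :
    Potential k ((sharp Q g n C).loc (isoSet Q g n C)) :=
  (Finset.univ (α := T.TV)).toList.map fun v =>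
    ((if T.isWhite v then (1 : k) else -1), xiList Q g n C cd (T.cyc v))

/-- The degree of arrows of `Q^#`: isomorphism arrows have degree `1`, the
generating arrows degree `0` (their formal inverses then get degree `-1`). -/
def sharpWeight : (sharp Q g n C).A → ℤ := Sum.elim (fun _ => 0) fun _ => 1

/-- The rotation of a cycle `l` placing the arrow `a` at the end. -/
def rotTo (l : List Q.A) (a : Q.A) : List Q.A := l.rotate (l.idxOf a + 1)

end Quiv

/-!
`ξ` comes from the universal properties of the path algebra and of the localisation. For
injectivity, let `ℂQ'` act on `ℂQ`, writing `φ` also for the automorphism of `ℂQ` it induces: a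
generating arrow acts by left multiplication, an isomorphism arrow `φ^t(i) → φ^{t+1}(i)` by
`z ↦ e_{φ^{t+1}(i)} φ(z)` and its inverse by `z ↦ e_{φ^t(i)} φ⁻¹(z)`. A path of isomorphism
arrows and inverses from `i` to `j` then acts on `e_i ℂQ` as `e_j φ^m` with `φ^m(i) = j`, so
`ξ(a) = p_a a_j q_a` acts as `z ↦ e_{t(a)} φ^{m_p}(a_j) φ^{m_p + m_q}(e_{s(a)} z)`. If
`φ^m(a_j) = a`, freeness of the vertex orbits gives `m_p ≡ m` and `m_q ≡ -m` modulo `n`, so `ξ(a)`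
acts as left multiplication by `a`. Hence every `ξ(x)` acts as left multiplication by `x`, and
`x` is the action of `ξ(x)` on `1`.
-/

namespace Quiv

section PathAlgebra

variable {k : Type} [CommRing k] {Q : Quiv}

variable (k Q) in
def pathMk : FreeAlgebra k (Q.V ⊕ Q.A) →ₐ[k] PathAlg k Q := RingQuot.mkAlgHom k (PathRel k Q)

lemma pathMk_rel {x y : FreeAlgebra k (Q.V ⊕ Q.A)} (h : PathRel k Q x y) :
    pathMk k Q x = pathMk k Q y :=
  RingQuot.mkAlgHom_rel k h

lemma vtx_mul_vtx (i j : Q.V) :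
    vtx k Q i * vtx k Q j = if i = j then vtx k Q i else 0 := by
  change pathMk k Q _ * pathMk k Q _ = if i = j then pathMk k Q _ else 0
  rw [← map_mul, pathMk_rel (.vertex_mul i j), apply_ite (pathMk k Q), map_zero]

lemma vtx_mul_self (i : Q.V) : vtx k Q i * vtx k Q i = vtx k Q i := by
  simp [vtx_mul_vtx]

lemma sum_vtx : ∑ i : Q.V, vtx k Q i = 1 := by
  change ∑ i, pathMk k Q _ = 1
  rw [← map_sum, pathMk_rel .vertex_sum, map_one]

lemma vtx_mul_arr (a : Q.A) : vtx k Q (Q.t a) * arr k Q a = arr k Q a := by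
  change pathMk k Q _ * pathMk k Q _ = pathMk k Q _
  rw [← map_mul, pathMk_rel (.target_mul a)]

lemma arr_mul_vtx (a : Q.A) : arr k Q a * vtx k Q (Q.s a) = arr k Q a := by
  change pathMk k Q _ * pathMk k Q _ = pathMk k Q _
  rw [← map_mul, pathMk_rel (.source_mul a)]

def pathAlgLift {A : Type*} [Ring A] [Algebra k A] (fv : Q.V → A) (fa : Q.A → A)
    (h_vtx_mul_vtx : ∀ i j, fv i * fv j = if i = j then fv i else 0)
    (h_sum_vtx : ∑ i, fv i = 1)
    (h_vtx_mul_arr : ∀ a, fv (Q.t a) * fa a = fa a)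
    (h_arr_mul_vtx : ∀ a, fa a * fv (Q.s a) = fa a) :
    PathAlg k Q →ₐ[k] A :=
  RingQuot.liftAlgHom k ⟨FreeAlgebra.lift k (Sum.elim fv fa), by
    rintro _ _ (⟨i, j⟩ | _ | ⟨a⟩ | ⟨a⟩)
    · simp only [map_mul, FreeAlgebra.lift_ι_apply, Sum.elim_inl, h_vtx_mul_vtx]
      split_ifs <;> simp [FreeAlgebra.lift_ι_apply]
    all_goals simp only [map_mul, map_sum, map_one, FreeAlgebra.lift_ι_apply, Sum.elim_inl,
      Sum.elim_inr, *]⟩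

section Lift

variable {A : Type*} [Ring A] [Algebra k A] {fv : Q.V → A} {fa : Q.A → A} {h₁ h₂ h₃ h₄}

@[simp] lemma pathAlgLift_vtx (i : Q.V) : pathAlgLift fv fa h₁ h₂ h₃ h₄ (vtx k Q i) = fv i :=
  (RingQuot.liftAlgHom_mkAlgHom_apply k _ _ _).trans (FreeAlgebra.lift_ι_apply _ _)

@[simp] lemma pathAlgLift_arr (a : Q.A) : pathAlgLift fv fa h₁ h₂ h₃ h₄ (arr k Q a) = fa a :=
  (RingQuot.liftAlgHom_mkAlgHom_apply k _ _ _).trans (FreeAlgebra.lift_ι_apply _ _)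

end Lift

lemma pathAlg_algHom_ext {A : Type*} [Ring A] [Algebra k A] {f f' : PathAlg k Q →ₐ[k] A}
    (hv : ∀ i, f (vtx k Q i) = f' (vtx k Q i)) (ha : ∀ a, f (arr k Q a) = f' (arr k Q a)) :
    f = f' :=
  RingQuot.ringQuot_ext' k f f' (FreeAlgebra.hom_ext (funext (Sum.rec hv ha)))

lemma pathOf_cons (x : Q.A) (l : List Q.A) :
    pathOf k Q (x :: l) = arr k Q x * pathOf k Q l :=
  List.prod_cons

lemma pathOf_singleton (x : Q.A) : pathOf k Q [x] = arr k Q x := by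
  simp [pathOf]

lemma pathOf_append (l₁ l₂ : List Q.A) :
    pathOf k Q (l₁ ++ l₂) = pathOf k Q l₁ * pathOf k Q l₂ := by
  simp [pathOf]

lemma IsPathFrom.head_t {x : Q.A} {l : List Q.A} {i j : Q.V} (h : IsPathFrom Q (x :: l) i j) :
    Q.t x = j :=
  h.2.2.1 (List.cons_ne_nil x l)

lemma IsPathFrom.tail {x : Q.A} {l : List Q.A} {i j : Q.V} (h : IsPathFrom Q (x :: l) i j) :
    IsPathFrom Q l i (Q.s x) := by
  obtain ⟨hc, -, -, hlast⟩ := h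
  refine ⟨(List.isChain_cons.mp hc).2, ?_, fun hl => ?_, fun hl => ?_⟩
  · rintro rfl
    exact (hlast (List.cons_ne_nil x [])).symm
  · exact ((List.isChain_cons.mp hc).1 _ (List.head?_eq_some_head hl)).symm
  · simpa [List.getLast_cons hl] using hlast (List.cons_ne_nil x l)

lemma IsPathFrom.vtx_mul_pathOf {l : List Q.A} {i j : Q.V} (h : IsPathFrom Q l i j) :
    vtx k Q j * pathOf k Q l = pathOf k Q l * vtx k Q i := by
  induction l generalizing j with
  | nil => simp [pathOf, h.2.1 rfl]
  | cons x l ih =>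
    rw [pathOf_cons, ← mul_assoc, ← h.head_t, vtx_mul_arr, mul_assoc, ← ih h.tail, ← mul_assoc,
      arr_mul_vtx]

end PathAlgebra

section Automorphism

variable {Q : Quiv}

def Aut.symm (g : Aut Q) : Aut Q where
  onV := g.onV.symm
  onA := g.onA.symm
  s_comm a := by rw [Equiv.eq_symm_apply, ← g.s_comm, Equiv.apply_symm_apply]
  t_comm a := by rw [Equiv.eq_symm_apply, ← g.t_comm, Equiv.apply_symm_apply]

variable {k : Type} [CommRing k] (g : Aut Q)

variable (k) in
def Aut.pathAlgHom : PathAlg k Q →ₐ[k] PathAlg k Q :=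
  pathAlgLift (fun i => vtx k Q (g.onV i)) (fun a => arr k Q (g.onA a))
    (fun i j => by rw [vtx_mul_vtx, g.onV.injective.eq_iff])
    ((g.onV.sum_comp (vtx k Q)).trans sum_vtx)
    (fun a => by rw [← g.t_comm, vtx_mul_arr])
    (fun a => by rw [← g.s_comm, arr_mul_vtx])

variable (k) in
def Aut.pathAlgEquiv : PathAlg k Q ≃ₐ[k] PathAlg k Q :=
  AlgEquiv.ofAlgHom (g.pathAlgHom k) (g.symm.pathAlgHom k)
    (pathAlg_algHom_ext (fun i => by simp [Aut.pathAlgHom, Aut.symm])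
      (fun a => by simp [Aut.pathAlgHom, Aut.symm]))
    (pathAlg_algHom_ext (fun i => by simp [Aut.pathAlgHom, Aut.symm])
      (fun a => by simp [Aut.pathAlgHom, Aut.symm]))

lemma algEquiv_zpow_apply_of_semiconj {A X : Type*} [Semiring A] [Algebra k A]
    (e : A ≃ₐ[k] A) (f : Equiv.Perm X) (φ : X → A) (h : ∀ x, e (φ x) = φ (f x)) (m : ℤ)
    (x : X) : (e ^ m) (φ x) = φ ((f ^ m) x) := by
  induction m generalizing x with
  | zero => rfl
  | succ m ih => rw [zpow_add_one, zpow_add_one, AlgEquiv.mul_apply, h, ih, Equiv.Perm.mul_apply]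
  | pred m ih =>
    have h_inv : e⁻¹ (φ x) = φ (f⁻¹ x) := by
      rw [AlgEquiv.aut_inv, AlgEquiv.symm_apply_eq, h, ← Equiv.Perm.mul_apply, mul_inv_cancel,
        Equiv.Perm.one_apply]
    rw [zpow_sub_one, zpow_sub_one, AlgEquiv.mul_apply, h_inv, ih, Equiv.Perm.mul_apply]

lemma Aut.pathAlgEquiv_zpow_vtx (m : ℤ) (i : Q.V) :
    (g.pathAlgEquiv k ^ m) (vtx k Q i) = vtx k Q ((g.onV ^ m) i) :=
  algEquiv_zpow_apply_of_semiconj _ _ _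
    (fun _ => pathAlgLift_vtx (h₁ := _) (h₂ := _) (h₃ := _) (h₄ := _) _) m i

lemma Aut.pathAlgEquiv_zpow_arr (m : ℤ) (a : Q.A) :
    (g.pathAlgEquiv k ^ m) (arr k Q a) = arr k Q ((g.onA ^ m) a) :=
  algEquiv_zpow_apply_of_semiconj _ _ _
    (fun _ => pathAlgLift_arr (h₁ := _) (h₂ := _) (h₃ := _) (h₄ := _) _) m a

end Automorphism

section Orbits

variable {Q : Quiv} (g : Aut Q) {n : ℕ}

lemma zpow_eq_one_of_pow_eq_one_of_dvd {G : Type*} [Group G] {x : G} (h : x ^ n = 1) {m : ℤ}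
    (hm : (n : ℤ) ∣ m) : x ^ m = 1 :=
  orderOf_dvd_iff_zpow_eq_one.mp
    ((Int.natCast_dvd_natCast.mpr (orderOf_dvd_of_pow_eq_one h)).trans hm)

lemma Aut.onV_pow_eq_one (horder : Aut.OrderDvd Q g n) : g.onV ^ n = 1 := Equiv.ext horder.1

lemma Aut.onA_pow_eq_one (horder : Aut.OrderDvd Q g n) : g.onA ^ n = 1 := Equiv.ext horder.2

lemma Aut.dvd_sub_of_zpow_onV_apply_eq (hn : 0 < n) (horder : Aut.OrderDvd Q g n)
    (hfree : Aut.FreeVertexOrbits Q g n) {i : Q.V} {m m' : ℤ}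
    (h : (g.onV ^ m) i = (g.onV ^ m') i) : (n : ℤ) ∣ m - m' := by
  have hfix : (g.onV ^ ((m - m') % n)) ((g.onV ^ m') i) = (g.onV ^ m') i := by
    rw [← zpow_eq_zpow_emod' _ (g.onV_pow_eq_one horder), ← Equiv.Perm.mul_apply, ← zpow_add,
      sub_add_cancel, h]
  obtain ⟨r, hr⟩ := Int.eq_ofNat_of_zero_le (Int.emod_nonneg (m - m') (by omega : (n : ℤ) ≠ 0))
  have hr_lt : r < n := by
    have := Int.emod_lt_of_pos (m - m') (by omega : (0 : ℤ) < n)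
    omega
  rw [hr, zpow_natCast] at hfix
  obtain rfl : r = 0 := by
    by_contra hr0
    exact hfree _ r (Nat.pos_of_ne_zero hr0) hr_lt hfix
  exact Int.dvd_of_emod_eq_zero hr

variable {k : Type} [CommRing k]

lemma Aut.pathAlgEquiv_zpow_eq_one (horder : Aut.OrderDvd Q g n) {m : ℤ} (hm : (n : ℤ) ∣ m) :
    g.pathAlgEquiv k ^ m = 1 := by
  apply AlgEquiv.coe_toAlgHom_injective
  refine pathAlg_algHom_ext (fun i => ?_) (fun a => ?_)
  · change (g.pathAlgEquiv k ^ m) (vtx k Q i) = vtx k Q i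
    rw [g.pathAlgEquiv_zpow_vtx,
      zpow_eq_one_of_pow_eq_one_of_dvd (g.onV_pow_eq_one horder) hm, Equiv.Perm.one_apply]
  · change (g.pathAlgEquiv k ^ m) (arr k Q a) = arr k Q a
    rw [g.pathAlgEquiv_zpow_arr,
      zpow_eq_one_of_pow_eq_one_of_dvd (g.onA_pow_eq_one horder) hm, Equiv.Perm.one_apply]

end Orbits

section Representation

variable {k : Type} [CommRing k] {Q : Quiv} (g : Aut Q)

variable (k) in
/-- The action of a path of isomorphism arrows and their inverses of total degree `ε` that ends
at `i`. -/
def Aut.shiftAt (ε : ℤ) (i : Q.V) : Module.End k (PathAlg k Q) :=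
  Algebra.lmul k _ (vtx k Q i) * (g.pathAlgEquiv k ^ ε).toLinearMap

lemma Aut.shiftAt_zero (i : Q.V) : g.shiftAt k 0 i = Algebra.lmul k _ (vtx k Q i) := by
  rw [Aut.shiftAt, zpow_zero, AlgEquiv.one_toLinearMap, mul_one]

lemma Aut.lmul_vtx_mul_shiftAt (ε : ℤ) (i : Q.V) :
    Algebra.lmul k _ (vtx k Q i) * g.shiftAt k ε i = g.shiftAt k ε i := by
  rw [Aut.shiftAt, ← mul_assoc, ← map_mul, vtx_mul_self]

lemma Aut.shiftAt_mul_lmul_mul_shiftAt (δ ε : ℤ) (i j : Q.V) (x : PathAlg k Q) :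
    g.shiftAt k δ i * Algebra.lmul k _ x * g.shiftAt k ε j =
      Algebra.lmul k _ (vtx k Q i * (g.pathAlgEquiv k ^ δ) (x * vtx k Q j)) *
        (g.pathAlgEquiv k ^ (δ + ε)).toLinearMap := by
  ext w
  simp [Aut.shiftAt, zpow_add, AlgEquiv.mul_apply, mul_assoc]

lemma Aut.shiftAt_mul_shiftAt {δ ε : ℤ} {i j : Q.V} (h : (g.onV ^ δ) j = i) :
    g.shiftAt k δ i * g.shiftAt k ε j = g.shiftAt k (δ + ε) i := by
  rw [← mul_one (g.shiftAt k δ i), ← map_one (Algebra.lmul k _), shiftAt_mul_lmul_mul_shiftAt,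
    one_mul, g.pathAlgEquiv_zpow_vtx, h, vtx_mul_self, Aut.shiftAt]

lemma Aut.shiftAt_mul_lmul_vtx {ε : ℤ} {i j : Q.V} (h : (g.onV ^ ε) i = j) :
    g.shiftAt k ε j * Algebra.lmul k _ (vtx k Q i) = g.shiftAt k ε j := by
  rw [← g.shiftAt_zero, g.shiftAt_mul_shiftAt h, add_zero]

variable (n : ℕ) (C : OrbitChoice Q g)

local notation "Q'" => loc (sharp Q g n C) (isoSet Q g n C)

lemma zpow_one_apply_sharp_s {x : (sharp Q g n C).A} (hx : x ∈ isoSet Q g n C) :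
    (g.onV ^ (1 : ℤ)) ((sharp Q g n C).s x) = (sharp Q g n C).t x := by
  obtain ⟨y, rfl⟩ := hx
  rw [zpow_one]
  exact (Function.iterate_succ_apply' _ _ _).symm

lemma zpow_neg_one_apply_sharp_t {x : (sharp Q g n C).A} (hx : x ∈ isoSet Q g n C) :
    (g.onV ^ (-1 : ℤ)) ((sharp Q g n C).t x) = (sharp Q g n C).s x := by
  rw [← zpow_one_apply_sharp_s g n C hx, zpow_neg_one, zpow_one]
  exact g.onV.symm_apply_apply _

variable (k) in
def arrRep : (Q').A → Module.End k (PathAlg k Q) :=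
  Sum.elim
    (Sum.elim (fun b => Algebra.lmul k _ (arr k Q b.1))
      fun y => g.shiftAt k 1 ((sharp Q g n C).t (.inr y)))
    fun x => g.shiftAt k (-1) ((sharp Q g n C).s x.1)

variable (k) in
def pathRep : PathAlg k (Q') →ₐ[k] Module.End k (PathAlg k Q) :=
  pathAlgLift (fun i => Algebra.lmul k _ (vtx k Q i)) (arrRep k g n C)
    (fun (i j : Q.V) => show Algebra.lmul k _ (vtx k Q i) * Algebra.lmul k _ (vtx k Q j) =
        if i = j then Algebra.lmul k _ (vtx k Q i) else 0 by
      rw [← map_mul, vtx_mul_vtx, apply_ite (Algebra.lmul k _), map_zero])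
    (show ∑ i : Q.V, Algebra.lmul k _ (vtx k Q i) = 1 by rw [← map_sum, sum_vtx, map_one])
    (by
      rintro ((b | y) | x)
      · exact (map_mul (Algebra.lmul k _) _ _).symm.trans (congrArg _ (vtx_mul_arr b.1))
      · exact g.lmul_vtx_mul_shiftAt _ _
      · exact g.lmul_vtx_mul_shiftAt _ _)
    (by
      rintro ((b | y) | ⟨x, hx⟩)
      · exact (map_mul (Algebra.lmul k _) _ _).symm.trans (congrArg _ (arr_mul_vtx b.1))
      · exact g.shiftAt_mul_lmul_vtx (zpow_one_apply_sharp_s g n C ⟨y, rfl⟩)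
      · exact g.shiftAt_mul_lmul_vtx (zpow_neg_one_apply_sharp_t g n C hx))

@[simp] lemma pathRep_vtx (i : Q.V) :
    pathRep k g n C (vtx k (Q') i) = Algebra.lmul k _ (vtx k Q i) :=
  pathAlgLift_vtx (Q := Q') i

@[simp] lemma pathRep_arr (x : (Q').A) : pathRep k g n C (arr k (Q') x) = arrRep k g n C x :=
  pathAlgLift_arr x

lemma exists_arrRep_eq_shiftAt {x : (Q').A}
    (hx : (∃ y, x = isoArrLoc Q g n C y) ∨ ∃ y, x = isoInvLoc Q g n C y) :
    ∃ ε : ℤ, (g.onV ^ ε) ((Q').s x) = (Q').t x ∧ arrRep k g n C x = g.shiftAt k ε ((Q').t x) := by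
  rcases hx with ⟨y, rfl⟩ | ⟨y, rfl⟩
  · exact ⟨1, zpow_one_apply_sharp_s g n C ⟨y, rfl⟩, rfl⟩
  · exact ⟨-1, zpow_neg_one_apply_sharp_t g n C ⟨y, rfl⟩, rfl⟩

lemma exists_pathRep_pathOf_mul_lmul_vtx_eq_shiftAt {l : List (Q').A}
    (hl : IsIsoList Q g n C l) {i j : Q.V} (hp : IsPathFrom (Q') l i j) :
    ∃ m : ℤ, (g.onV ^ m) i = j ∧
      pathRep k g n C (pathOf k (Q') l) * Algebra.lmul k _ (vtx k Q i) = g.shiftAt k m j := by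
  induction l generalizing j with
  | nil =>
    obtain rfl : i = j := hp.2.1 rfl
    exact ⟨0, rfl, by rw [pathOf, List.map_nil, List.prod_nil, map_one, one_mul, g.shiftAt_zero]⟩
  | cons x l ih =>
    obtain ⟨m, hm, hl_rep⟩ := ih (fun y hy => hl y (List.mem_cons_of_mem x hy)) hp.tail
    obtain ⟨ε, hε, hx_rep⟩ := exists_arrRep_eq_shiftAt (k := k) g n C (hl x List.mem_cons_self)
    rw [hp.head_t] at hε hx_rep
    refine ⟨ε + m, by rw [zpow_add, Equiv.Perm.mul_apply, hm, hε], ?_⟩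
    rw [pathOf_cons, map_mul, mul_assoc, hl_rep, pathRep_arr, hx_rep, g.shiftAt_mul_shiftAt hε]

variable (k) in
def locRep : LocAlg k (sharp Q g n C) (isoSet Q g n C) →ₐ[k] Module.End k (PathAlg k Q) :=
  RingQuot.liftAlgHom k ⟨pathRep k g n C, by
    rintro _ _ (⟨⟨x, hx⟩⟩ | ⟨⟨x, hx⟩⟩) <;> erw [map_mul, pathRep_arr, pathRep_arr, pathRep_vtx] <;>
      obtain ⟨y, rfl⟩ := hx
    · exact (g.shiftAt_mul_shiftAt (zpow_neg_one_apply_sharp_t g n C ⟨y, rfl⟩)).trans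
        (by rw [neg_add_cancel]; exact g.shiftAt_zero _)
    · exact (g.shiftAt_mul_shiftAt (ε := -1) (zpow_one_apply_sharp_s g n C ⟨y, rfl⟩)).trans
        (by rw [add_neg_cancel]; exact g.shiftAt_zero _)⟩

lemma locRep_locMk (x : PathAlg k (Q')) :
    locRep k g n C (locMk k (sharp Q g n C) (isoSet Q g n C) x) = pathRep k g n C x :=
  RingQuot.liftAlgHom_mkAlgHom_apply _ _ _ _

variable (cd : ConnData Q g n C)

lemma genLoc_t (a : Q.A) : (Q').t (genLoc Q g n C a) = Q.t (C.genArrow a) := rfl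

lemma genLoc_s (a : Q.A) : (Q').s (genLoc Q g n C a) = Q.s (C.genArrow a) := rfl

variable (k) in
def xiPath : PathAlg k Q →ₐ[k] PathAlg k (Q') :=
  pathAlgLift (vtx k (Q')) (fun a => pathOf k (Q') (xiArrList Q g n C cd a))
    (fun i j => vtx_mul_vtx (Q := Q') i j) sum_vtx
    (fun a => by
      rw [xiArrList, pathOf_append, pathOf_append, ← mul_assoc, ← mul_assoc,
        (cd.endP a).vtx_mul_pathOf, ← genLoc_t, mul_assoc _ (vtx _ _ _), pathOf_singleton,
        vtx_mul_arr])
    (fun a => by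
      rw [xiArrList, pathOf_append, pathOf_append, mul_assoc, ← (cd.endQc a).vtx_mul_pathOf,
        ← genLoc_s, ← mul_assoc, pathOf_singleton, mul_assoc _ (arr _ _ _), arr_mul_vtx])

lemma arrRep_genLoc (a : Q.A) :
    arrRep k g n C (genLoc Q g n C a) = Algebra.lmul k _ (arr k Q (C.genArrow a)) :=
  rfl

@[simp] lemma xiPath_vtx (i : Q.V) : xiPath k g n C cd (vtx k Q i) = vtx k (Q') i :=
  pathAlgLift_vtx i

@[simp] lemma xiPath_arr (a : Q.A) :
    xiPath k g n C cd (arr k Q a) = pathOf k (Q') (xiArrList Q g n C cd a) :=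
  pathAlgLift_arr a

variable (k) in
def xi : PathAlg k Q →ₐ[k] LocAlg k (sharp Q g n C) (isoSet Q g n C) :=
  (locMk k (sharp Q g n C) (isoSet Q g n C)).comp (xiPath k g n C cd)

lemma xiSpec_xi : XiSpec k Q g n C cd (xi k g n C cd) :=
  ⟨fun i => congrArg (locMk k _ _) (xiPath_vtx g n C cd i),
    fun a => congrArg (locMk k _ _) (xiPath_arr g n C cd a)⟩

lemma locRep_xi_vtx (i : Q.V) :
    locRep k g n C (xi k g n C cd (vtx k Q i)) = Algebra.lmul k _ (vtx k Q i) := by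
  rw [xi, AlgHom.comp_apply, locRep_locMk, xiPath_vtx, pathRep_vtx]

lemma exists_locRep_xi_arr_eq_shiftAt_mul (a : Q.A) :
    ∃ mp mq : ℤ, (g.onV ^ mp) (Q.t (C.genArrow a)) = Q.t a ∧
      (g.onV ^ mq) (Q.s a) = Q.s (C.genArrow a) ∧
      locRep k g n C (xi k g n C cd (arr k Q a)) =
        g.shiftAt k mp (Q.t a) * Algebra.lmul k _ (arr k Q (C.genArrow a)) *
          g.shiftAt k mq (Q.s (C.genArrow a)) := by
  obtain ⟨mq, hmq, hQc⟩ :=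
    exists_pathRep_pathOf_mul_lmul_vtx_eq_shiftAt (k := k) g n C (cd.isoQc a) (cd.endQc a)
  obtain ⟨mp, hmp, hP⟩ :=
    exists_pathRep_pathOf_mul_lmul_vtx_eq_shiftAt (k := k) g n C (cd.isoP a) (cd.endP a)
  refine ⟨mp, mq, hmp, hmq, ?_⟩
  calc locRep k g n C (xi k g n C cd (arr k Q a))
      = locRep k g n C (xi k g n C cd (arr k Q a)) * Algebra.lmul k _ (vtx k Q (Q.s a)) := by
        conv_lhs => rw [← arr_mul_vtx a]
        rw [map_mul, map_mul, locRep_xi_vtx]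
    _ = pathRep k g n C (pathOf k (Q') (cd.P a)) * Algebra.lmul k _ (vtx k Q (Q.t (C.genArrow a))) *
          Algebra.lmul k _ (arr k Q (C.genArrow a)) *
          (pathRep k g n C (pathOf k (Q') (cd.Qc a)) * Algebra.lmul k _ (vtx k Q (Q.s a))) := by
        rw [xi, AlgHom.comp_apply, locRep_locMk, xiPath_arr, xiArrList, pathOf_append,
          pathOf_append, pathOf_singleton, map_mul, map_mul, pathRep_arr, arrRep_genLoc,
          mul_assoc _ (Algebra.lmul k _ (vtx k Q _)), ← map_mul, vtx_mul_arr]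
        simp only [mul_assoc]
    _ = _ := by rw [hP, hQc]

lemma locRep_xi_arr (hn : 0 < n) (horder : Aut.OrderDvd Q g n)
    (hfree : Aut.FreeVertexOrbits Q g n) (a : Q.A) :
    locRep k g n C (xi k g n C cd (arr k Q a)) = Algebra.lmul k _ (arr k Q a) := by
  obtain ⟨mp, mq, hmp, hmq, hrep⟩ :=
    exists_locRep_xi_arr_eq_shiftAt_mul (k := k) g n C cd a
  obtain ⟨ma, hma⟩ := C.genArrow_orbit a
  have hta : (g.onV ^ (ma : ℤ)) (Q.t (C.genArrow a)) = Q.t a := by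
    rw [zpow_natCast]
    exact (Function.Semiconj.iterate_right g.t_comm ma _).symm.trans (congrArg Q.t hma)
  have hsa : (g.onV ^ (ma : ℤ)) (Q.s (C.genArrow a)) = Q.s a := by
    rw [zpow_natCast]
    exact (Function.Semiconj.iterate_right g.s_comm ma _).symm.trans (congrArg Q.s hma)
  replace hma : (g.onA ^ (ma : ℤ)) (C.genArrow a) = a := by rw [zpow_natCast]; exact hma
  have hp : (n : ℤ) ∣ mp - ma :=
    g.dvd_sub_of_zpow_onV_apply_eq hn horder hfree (hmp.trans hta.symm)
  have hq : (n : ℤ) ∣ mq + ma := by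
    simpa using g.dvd_sub_of_zpow_onV_apply_eq hn horder hfree (m' := 0)
      (by rw [zpow_add, Equiv.Perm.mul_apply, hsa, hmq, zpow_zero, Equiv.Perm.one_apply])
  have harr : (g.pathAlgEquiv k ^ mp) (arr k Q (C.genArrow a)) = arr k Q a := by
    rw [g.pathAlgEquiv_zpow_arr, ← sub_add_cancel mp ma, zpow_add, Equiv.Perm.mul_apply, hma,
      zpow_eq_one_of_pow_eq_one_of_dvd (g.onA_pow_eq_one horder) hp, Equiv.Perm.one_apply]
  have hone : g.pathAlgEquiv k ^ (mp + mq) = 1 :=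
    g.pathAlgEquiv_zpow_eq_one horder (by simpa using dvd_add hp hq)
  rw [hrep, g.shiftAt_mul_lmul_mul_shiftAt, arr_mul_vtx, harr, vtx_mul_arr, hone,
    AlgEquiv.one_toLinearMap, mul_one]

lemma locRep_comp_xi (hn : 0 < n) (horder : Aut.OrderDvd Q g n)
    (hfree : Aut.FreeVertexOrbits Q g n) :
    (locRep k g n C).comp (xi k g n C cd) = Algebra.lmul k (PathAlg k Q) :=
  pathAlg_algHom_ext (locRep_xi_vtx g n C cd) (locRep_xi_arr g n C cd hn horder hfree)

lemma xi_injective (hn : 0 < n) (horder : Aut.OrderDvd Q g n)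
    (hfree : Aut.FreeVertexOrbits Q g n) : Function.Injective (xi k g n C cd) := by
  refine Function.Injective.of_comp (f := locRep k g n C) ?_
  rw [← AlgHom.coe_comp, locRep_comp_xi g n C cd hn horder hfree]
  exact Algebra.lmul_injective

end Representation

end Quiv

open Quiv in
theorem statement_3_general (Q : Quiv) (T : Quiv.Tiling Q) (g : Quiv.TAut Q T) (n : ℕ)
    (hn : 0 < n)
    (horder : Quiv.Aut.OrderDvd Q g.toAut n)
    (hfree : Quiv.Aut.FreeVertexOrbits Q g.toAut n)
    (C : Quiv.OrbitChoice Q g.toAut)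
    (cd : Quiv.ConnData Q g.toAut n C) :
    ∃ ξ : PathAlg ℂ Q →ₐ[ℂ]
        LocAlg ℂ (sharp Q g.toAut n C) (isoSet Q g.toAut n C),
      XiSpec ℂ Q g.toAut n C cd ξ ∧ Function.Injective ξ :=
  ⟨xi ℂ g.toAut n C cd, xiSpec_xi g.toAut n C cd, xi_injective g.toAut n C cd hn horder hfree⟩

open Quiv in
/-- With `Q` the dual quiver of a brane tiling preserved by an
orientation-preserving automorphism `φ` of order `n` of the surface (with all
vertex orbits of size `n`), and `ℂQ'` the localisation of the path algebra of
`Q^#` at the isomorphism arrows, the map `ξ : ℂQ → ℂQ'` sending each constant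
path `e_i` to `e_i` and each arrow `a` to `p_a a_j q_a` (where `a_j` is the
chosen generating arrow of the orbit of `a`, and `p_a : t(a_j) → t(a)`,
`q_a : s(a) → s(a_j)` are the connecting paths composed solely of isomorphism
arrows or their inverses) is a well-defined injective algebra homomorphism. -/
theorem statement_3 (Q : Quiv) (T : Quiv.Tiling Q) (g : Quiv.TAut Q T) (n : ℕ)
    (hn : 0 < n)
    (horder : Quiv.Aut.OrderDvd Q g.toAut n)
    (horderTV : ∀ v, (⇑g.onTV)^[n] v = v)
    (hfree : Quiv.Aut.FreeVertexOrbits Q g.toAut n)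
    (C : Quiv.OrbitChoice Q g.toAut)
    (cd : Quiv.ConnData Q g.toAut n C) :
    ∃ ξ : PathAlg ℂ Q →ₐ[ℂ]
        LocAlg ℂ (sharp Q g.toAut n C) (isoSet Q g.toAut n C),
      XiSpec ℂ Q g.toAut n C cd ξ ∧ Function.Injective ξ :=
  statement_3_general Q T g n hn horder hfree C cd
end
end

section
/- Grade ℂQ' by assigning the isomorphism arrows r_{i_u,t} degree 1, their inverses degree −1, and all other arrows degree 0. Then for every arrow a ∈ Q₁, the element ξ(a) ∈ ℂQ' is homogeneous of degree 0, of degree n, or of degree −n. -/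
noncomputable section
open scoped Classical

/-!
Write each vertex as `φ^t(i_u)` with `i_u` the chosen representative of its orbit and
`0 ≤ t < n`; since the orbits are free of size `n`, this level `t` is well defined. Every
isomorphism arrow raises the level by one and every inverse lowers it by one, so a path of
them from `i` to `j` has degree `level j - level i`. Hence
`deg ξ(a) = (level t(a) - level t(a_j)) + (level s(a_j) - level s(a))`. As `a = φ^m(a_j)`,
both differences are `≡ m (mod n)`, so the degree is a multiple of `n` of absolute value
less than `2n`.
-/

theorem Int.eq_zero_or_eq_or_eq_neg_of_dvd_of_abs_lt {n x : ℤ} (h : n ∣ x)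
    (hx : |x| < 2 * n) : x = 0 ∨ x = n ∨ x = -n := by
  obtain ⟨k, rfl⟩ := h
  have hn : 0 < n := by linarith [abs_nonneg (n * k)]
  rw [abs_mul, abs_of_pos hn] at hx
  have hk : |k| < 2 := lt_of_mul_lt_mul_left (by linarith) hn.le
  rw [abs_lt] at hk
  obtain ⟨hk₁, hk₂⟩ := hk
  interval_cases k <;> simp

namespace Quiv

theorem IsPathFrom.sum_map_eq_sub {Q : Quiv} {w : Q.A → ℤ} {L : Q.V → ℤ}
    {l : List Q.A} (hw : ∀ x ∈ l, w x = L (Q.t x) - L (Q.s x)) {i j : Q.V}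
    (hl : IsPathFrom Q l i j) : (l.map w).sum = L j - L i := by
  induction l generalizing j with
  | nil => simp [hl.2.1 rfl]
  | cons a l ih =>
    obtain ⟨hchain, -, hhead, hlast⟩ := hl
    rw [List.map_cons, List.sum_cons, hw a List.mem_cons_self,
      ← hhead (List.cons_ne_nil a l), List.head_cons]
    rcases l with _ | ⟨b, l⟩
    · simp [← hlast (List.cons_ne_nil a [])]
    · have hrest : IsPathFrom Q (b :: l) i (Q.s a) :=
        ⟨hchain.tail, by simp, fun _ => (List.isChain_cons_cons.mp hchain).1.symm,
          fun _ => by simpa using hlast (List.cons_ne_nil a _)⟩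
      rw [ih (fun x hx => hw x (List.mem_cons_of_mem a hx)) hrest]
      ring

theorem locProd_mem_degPart (k : Type) [CommRing k] (Q : Quiv) (S : Set Q.A)
    (w : Q.A → ℤ) (l : List (Q.loc S).A) :
    locProd k Q S l ∈ degPart k Q S w (l.map (locWeight Q S w)).sum :=
  Submodule.subset_span (Or.inr ⟨l, rfl, rfl⟩)

variable {Q : Quiv} {g : Aut Q} {n : ℕ}

theorem Aut.iterate_onV_mod (horder : Aut.OrderDvd Q g n) (m : ℕ) (i : Q.V) :
    (⇑g.onV)^[m % n] i = (⇑g.onV)^[m] i := by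
  conv_rhs => rw [← Nat.mod_add_div m n, Function.iterate_add_apply, Function.iterate_mul,
    Function.iterate_fixed (horder.1 i)]

theorem Aut.eq_of_iterate_onV_eq (hfree : Aut.FreeVertexOrbits Q g n) {i : Q.V} {r r' : ℕ}
    (hr : r < n) (hr' : r' < n) (h : (⇑g.onV)^[r] i = (⇑g.onV)^[r'] i) : r = r' := by
  wlog hle : r ≤ r' generalizing r r'
  · exact (this hr' hr h.symm (le_of_not_ge hle)).symm
  by_contra hne
  refine hfree ((⇑g.onV)^[r] i) (r' - r) (by omega) (by omega) ?_
  rw [← Function.iterate_add_apply, Nat.sub_add_cancel hle, h]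

theorem Aut.t_iterate_onA (g : Aut Q) (m : ℕ) (a : Q.A) :
    Q.t ((⇑g.onA)^[m] a) = (⇑g.onV)^[m] (Q.t a) :=
  (Function.Semiconj.iterate_right g.t_comm m).eq a

theorem Aut.s_iterate_onA (g : Aut Q) (m : ℕ) (a : Q.A) :
    Q.s ((⇑g.onA)^[m] a) = (⇑g.onV)^[m] (Q.s a) :=
  (Function.Semiconj.iterate_right g.s_comm m).eq a

theorem OrbitChoice.repV_iterate (C : OrbitChoice Q g) (m : ℕ) (i : Q.V) :
    C.repV ((⇑g.onV)^[m] i) = C.repV i :=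
  congrFun (Function.iterate_invariant (funext C.repV_comm) m) i

def OrbitChoice.level (C : OrbitChoice Q g) (n : ℕ) (i : Q.V) : ℕ :=
  Nat.find (C.repV_orbit i) % n

namespace OrbitChoice

variable (C : OrbitChoice Q g)

theorem level_lt (hn : 0 < n) (i : Q.V) : C.level n i < n :=
  Nat.mod_lt _ hn

theorem iterate_level (horder : Aut.OrderDvd Q g n) (i : Q.V) :
    (⇑g.onV)^[C.level n i] (C.repV i) = i := by
  rw [level, g.iterate_onV_mod horder]
  exact Nat.find_spec (C.repV_orbit i)

theorem level_eq_mod (hn : 0 < n) (horder : Aut.OrderDvd Q g n)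
    (hfree : Aut.FreeVertexOrbits Q g n) {i : Q.V} {r : ℕ}
    (h : (⇑g.onV)^[r] (C.repV i) = i) : C.level n i = r % n :=
  g.eq_of_iterate_onV_eq hfree (C.level_lt hn i) (Nat.mod_lt r hn) <| by
    rw [C.iterate_level horder, g.iterate_onV_mod horder, h]

theorem level_iterate_of_repV_eq (hn : 0 < n) (horder : Aut.OrderDvd Q g n)
    (hfree : Aut.FreeVertexOrbits Q g n) {u : Q.V} (hu : C.repV u = u) {t : ℕ}
    (ht : t < n) :
    C.level n ((⇑g.onV)^[t] u) = t := by
  rw [C.level_eq_mod hn horder hfree (r := t) (by rw [C.repV_iterate, hu]),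
    Nat.mod_eq_of_lt ht]

theorem level_iterate_modEq (hn : 0 < n) (horder : Aut.OrderDvd Q g n)
    (hfree : Aut.FreeVertexOrbits Q g n) (m : ℕ) (i : Q.V) :
    (C.level n ((⇑g.onV)^[m] i) : ℤ) ≡ m + C.level n i [ZMOD n] := by
  have h : C.level n ((⇑g.onV)^[m] i) = (m + C.level n i) % n :=
    C.level_eq_mod hn horder hfree <| by
      rw [C.repV_iterate, Function.iterate_add_apply, C.iterate_level horder]
  exact_mod_cast Int.natCast_modEq_iff.mpr (h ▸ Nat.mod_modEq _ n)

end OrbitChoice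

variable (C : OrbitChoice Q g)

theorem locWeight_sharpWeight_eq_level_sub (hn : 0 < n) (horder : Aut.OrderDvd Q g n)
    (hfree : Aut.FreeVertexOrbits Q g n) {x : ((sharp Q g n C).loc (isoSet Q g n C)).A}
    (hx : (∃ y, x = isoArrLoc Q g n C y) ∨ ∃ y, x = isoInvLoc Q g n C y) :
    locWeight (sharp Q g n C) (isoSet Q g n C) (sharpWeight Q g n C) x =
      (C.level n (((sharp Q g n C).loc (isoSet Q g n C)).t x) : ℤ) -
        C.level n (((sharp Q g n C).loc (isoSet Q g n C)).s x) := by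
  rcases hx with ⟨⟨⟨u, hu⟩, t⟩, rfl⟩ | ⟨⟨⟨u, hu⟩, t⟩, rfl⟩ <;>
  · have ht := t.isLt
    have h₀ := C.level_iterate_of_repV_eq hn horder hfree hu (t := t) (by omega)
    have h₁ := C.level_iterate_of_repV_eq hn horder hfree hu (t := t + 1) (by omega)
    simp only [locWeight, sharpWeight, isoArrLoc, isoInvLoc, loc, sharp, Sum.elim_inl,
      Sum.elim_inr, h₀, h₁]
    push_cast
    ring

theorem sum_map_locWeight_of_isIsoList (hn : 0 < n) (horder : Aut.OrderDvd Q g n)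
    (hfree : Aut.FreeVertexOrbits Q g n) {l : List ((sharp Q g n C).loc (isoSet Q g n C)).A}
    (hl : IsIsoList Q g n C l) {i j : Q.V}
    (hp : IsPathFrom ((sharp Q g n C).loc (isoSet Q g n C)) l i j) :
    (l.map (locWeight (sharp Q g n C) (isoSet Q g n C) (sharpWeight Q g n C))).sum =
      (C.level n j : ℤ) - C.level n i :=
  hp.sum_map_eq_sub (L := fun i : ((sharp Q g n C).loc (isoSet Q g n C)).V => C.level n i)
    fun x hx => locWeight_sharpWeight_eq_level_sub C hn horder hfree (hl x hx)

/-- The degree of `ξ(a) = p_a a_j q_a`. -/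
def xiArrDeg (cd : ConnData Q g n C) (a : Q.A) : ℤ :=
  ((xiArrList Q g n C cd a).map
    (locWeight (sharp Q g n C) (isoSet Q g n C) (sharpWeight Q g n C))).sum

theorem xiArrDeg_eq (hn : 0 < n) (horder : Aut.OrderDvd Q g n)
    (hfree : Aut.FreeVertexOrbits Q g n) (cd : ConnData Q g n C) (a : Q.A) :
    xiArrDeg C cd a =
      ((C.level n (Q.t a) : ℤ) - C.level n (Q.t (C.genArrow a))) +
        ((C.level n (Q.s (C.genArrow a)) : ℤ) - C.level n (Q.s a)) := by
  rw [xiArrDeg, xiArrList, List.map_append, List.map_append, List.sum_append, List.sum_append,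
    sum_map_locWeight_of_isIsoList C hn horder hfree (cd.isoP a) (cd.endP a),
    sum_map_locWeight_of_isIsoList C hn horder hfree (cd.isoQc a) (cd.endQc a)]
  simp only [List.map_cons, List.map_nil, List.sum_singleton]
  rw [show locWeight (sharp Q g n C) (isoSet Q g n C) (sharpWeight Q g n C)
    (genLoc Q g n C a) = 0 from rfl, add_zero]

theorem xiArrDeg_eq_zero_or_eq_or_eq_neg (hn : 0 < n) (horder : Aut.OrderDvd Q g n)
    (hfree : Aut.FreeVertexOrbits Q g n) (cd : ConnData Q g n C) (a : Q.A) :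
    xiArrDeg C cd a = 0 ∨ xiArrDeg C cd a = n ∨ xiArrDeg C cd a = -n := by
  obtain ⟨m, hm⟩ := C.genArrow_orbit a
  have ht := C.level_iterate_modEq hn horder hfree m (Q.t (C.genArrow a))
  have hs := C.level_iterate_modEq hn horder hfree m (Q.s (C.genArrow a))
  rw [← g.t_iterate_onA, hm] at ht
  rw [← g.s_iterate_onA, hm] at hs
  refine Int.eq_zero_or_eq_or_eq_neg_of_dvd_of_abs_lt ?_ ?_ <;>
    rw [xiArrDeg_eq C hn horder hfree cd a]
  · exact (dvd_sub hs.dvd ht.dvd).trans (dvd_of_eq (by ring))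
  · have := C.level_lt hn (Q.t a)
    have := C.level_lt hn (Q.s a)
    have := C.level_lt hn (Q.t (C.genArrow a))
    have := C.level_lt hn (Q.s (C.genArrow a))
    rw [abs_lt]
    omega

end Quiv

open Quiv in
theorem statement_4_general (Q : Quiv) (T : Quiv.Tiling Q) (g : Quiv.TAut Q T) (n : ℕ)
    (hn : 0 < n)
    (horder : Quiv.Aut.OrderDvd Q g.toAut n)
    (hfree : Quiv.Aut.FreeVertexOrbits Q g.toAut n)
    (C : Quiv.OrbitChoice Q g.toAut)
    (cd : Quiv.ConnData Q g.toAut n C)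
    (ξ : PathAlg ℂ Q →ₐ[ℂ] LocAlg ℂ (sharp Q g.toAut n C) (isoSet Q g.toAut n C))
    (hξ : XiSpec ℂ Q g.toAut n C cd ξ) :
    ∀ a : Q.A,
      ξ (arr ℂ Q a) ∈ degPart ℂ (sharp Q g.toAut n C) (isoSet Q g.toAut n C)
          (sharpWeight Q g.toAut n C) 0 ∨
      ξ (arr ℂ Q a) ∈ degPart ℂ (sharp Q g.toAut n C) (isoSet Q g.toAut n C)
          (sharpWeight Q g.toAut n C) (n : ℤ) ∨
      ξ (arr ℂ Q a) ∈ degPart ℂ (sharp Q g.toAut n C) (isoSet Q g.toAut n C)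
          (sharpWeight Q g.toAut n C) (-(n : ℤ)) := by
  intro a
  rw [hξ.2 a]
  rcases xiArrDeg_eq_zero_or_eq_or_eq_neg C hn horder hfree cd a with h | h | h
  · exact .inl (h ▸ locProd_mem_degPart ℂ _ _ _ _)
  · exact .inr (.inl (h ▸ locProd_mem_degPart ℂ _ _ _ _))
  · exact .inr (.inr (h ▸ locProd_mem_degPart ℂ _ _ _ _))

open Quiv in
/-- Grade `ℂQ'` by assigning the isomorphism arrows degree `1`,
their inverses degree `−1`, and all other arrows degree `0`.  Then for every
arrow `a ∈ Q₁`, the element `ξ(a) ∈ ℂQ'` is homogeneous of degree `0`, of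
degree `n`, or of degree `−n`. -/
theorem statement_4 (Q : Quiv) (T : Quiv.Tiling Q) (g : Quiv.TAut Q T) (n : ℕ)
    (hn : 0 < n)
    (horder : Quiv.Aut.OrderDvd Q g.toAut n)
    (horderTV : ∀ v, (⇑g.onTV)^[n] v = v)
    (hfree : Quiv.Aut.FreeVertexOrbits Q g.toAut n)
    (C : Quiv.OrbitChoice Q g.toAut)
    (cd : Quiv.ConnData Q g.toAut n C)
    (ξ : PathAlg ℂ Q →ₐ[ℂ] LocAlg ℂ (sharp Q g.toAut n C) (isoSet Q g.toAut n C))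
    (hξ : XiSpec ℂ Q g.toAut n C cd ξ) :
    ∀ a : Q.A,
      ξ (arr ℂ Q a) ∈ degPart ℂ (sharp Q g.toAut n C) (isoSet Q g.toAut n C)
          (sharpWeight Q g.toAut n C) 0 ∨
      ξ (arr ℂ Q a) ∈ degPart ℂ (sharp Q g.toAut n C) (isoSet Q g.toAut n C)
          (sharpWeight Q g.toAut n C) (n : ℤ) ∨
      ξ (arr ℂ Q a) ∈ degPart ℂ (sharp Q g.toAut n C) (isoSet Q g.toAut n C)
          (sharpWeight Q g.toAut n C) (-(n : ℤ)) :=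
  statement_4_general Q T g n hn horder hfree C cd ξ hξ
end
end
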